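/- arXiv:1811.00457 — 11 statements merged into one kernel-verified Lean document; each statement's English description precedes it below -/
import Mathlib

section
/- For all real numbers a > 0 and b, the integral over the real line ∫_{-∞}^{∞} Φ((y + b)/a) · φ(y) dy equals Φ(b/√(a² + 1)). -/
/-!
Writing `Φ(x / c) = P(c Z ≤ x)` for a standard normal `Z`, the integral is `P(a Z - Y ≤ b)` for
independent standard normals `Z, Y`, i.e. the distribution function at `b` of the convolution
`N(0, a²) ∗ N(0, 1) = N(0, a² + 1)`; the symmetry of `Y` turns `y + b` into `b - y`.
-/

open MeasureTheory Real

/-- Standard normal density. -/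
noncomputable def stdNormalPdf (x : ℝ) : ℝ := Real.exp (-x ^ 2 / 2) / Real.sqrt (2 * Real.pi)

/-- Standard normal CDF. -/
noncomputable def stdNormalCdf (x : ℝ) : ℝ := ∫ t in Set.Iic x, stdNormalPdf t

open ProbabilityTheory Set NNReal

lemma measureReal_conv_Iic (μ ν : Measure ℝ) [IsFiniteMeasure μ] [SFinite ν] (b : ℝ) :
    (μ ∗ ν).real (Iic b) = ∫ y, μ.real (Iic (b - y)) ∂ν := by
  have hslice (y : ℝ) :
      (fun x => (x, y)) ⁻¹' ((fun p : ℝ × ℝ => p.1 + p.2) ⁻¹' Iic b) = Iic (b - y) := by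
    ext x; simp [le_sub_iff_add_le]
  have hmeas : Measurable fun y => μ (Iic (b - y)) :=
    Antitone.measurable fun y y' h => measure_mono (Iic_subset_Iic.2 (by linarith))
  rw [Measure.real, Measure.conv, Measure.map_apply measurable_add measurableSet_Iic,
    Measure.prod_apply_symm (measurable_add measurableSet_Iic)]
  simp only [hslice]
  exact (integral_toReal hmeas.aemeasurable (ae_of_all _ fun _ => measure_lt_top _ _)).symm

lemma integral_comp_neg_gaussianReal {E : Type*} [NormedAddCommGroup E] [NormedSpace ℝ E]
    (v : ℝ≥0) (f : ℝ → E) : ∫ x, f (-x) ∂gaussianReal 0 v = ∫ x, f x ∂gaussianReal 0 v := by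
  conv_rhs => rw [← neg_zero, ← gaussianReal_map_neg]
  exact (integral_map_equiv (MeasurableEquiv.neg ℝ) f).symm

lemma gaussianReal_real_Iic_div (μ : ℝ) (v : ℝ≥0) {c : ℝ} (hc : 0 < c) (x : ℝ) :
    (gaussianReal μ v).real (Iic (x / c))
      = (gaussianReal (c * μ) (.mk (c ^ 2) (sq_nonneg c) * v)).real (Iic x) := by
  rw [← gaussianReal_map_const_mul, map_measureReal_apply (by fun_prop) measurableSet_Iic]
  congr 1
  ext t
  simp [le_div_iff₀ hc, mul_comm]

lemma stdNormalPdf_eq_gaussianPDFReal : stdNormalPdf = gaussianPDFReal 0 1 := by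
  ext x
  simp [stdNormalPdf, gaussianPDFReal_def, div_eq_inv_mul]

lemma integral_mul_stdNormalPdf (f : ℝ → ℝ) :
    ∫ y, f y * stdNormalPdf y = ∫ y, f y ∂gaussianReal 0 1 := by
  simp [integral_gaussianReal_eq_integral_smul one_ne_zero, stdNormalPdf_eq_gaussianPDFReal,
    mul_comm]

lemma stdNormalCdf_eq_measureReal_Iic (x : ℝ) :
    stdNormalCdf x = (gaussianReal 0 1).real (Iic x) := by
  rw [measureReal_def, gaussianReal_apply_eq_integral _ one_ne_zero, ENNReal.toReal_ofReal
    (setIntegral_nonneg measurableSet_Iic fun t _ => gaussianPDFReal_nonneg _ _ _),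
    stdNormalCdf, stdNormalPdf_eq_gaussianPDFReal]

lemma stdNormalCdf_div {c : ℝ} (hc : 0 < c) (x : ℝ) :
    stdNormalCdf (x / c) = (gaussianReal 0 (.mk (c ^ 2) (sq_nonneg c))).real (Iic x) := by
  rw [stdNormalCdf_eq_measureReal_Iic, gaussianReal_real_Iic_div 0 1 hc, mul_zero, mul_one]

theorem integral_cdf_mul_pdf (a b : ℝ) (ha : 0 < a) :
    (∫ y : ℝ, stdNormalCdf ((y + b) / a) * stdNormalPdf y) =
      stdNormalCdf (b / Real.sqrt (a ^ 2 + 1)) := by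
  have hvar : (.mk (a ^ 2) (sq_nonneg a) + 1 : ℝ≥0)
      = .mk (√(a ^ 2 + 1) ^ 2) (sq_nonneg _) := by
    ext; simp [Real.sq_sqrt (by positivity : 0 ≤ a ^ 2 + 1)]
  calc ∫ y, stdNormalCdf ((y + b) / a) * stdNormalPdf y
      = ∫ y, (gaussianReal 0 (.mk (a ^ 2) (sq_nonneg a))).real (Iic (b - y))
          ∂gaussianReal 0 1 := by
        rw [integral_mul_stdNormalPdf, ← integral_comp_neg_gaussianReal]
        simp_rw [stdNormalCdf_div ha, neg_add_eq_sub]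
    _ = (gaussianReal 0 (.mk (a ^ 2) (sq_nonneg a)) ∗ gaussianReal 0 1).real (Iic b) :=
        (measureReal_conv_Iic _ _ b).symm
    _ = stdNormalCdf (b / √(a ^ 2 + 1)) := by
        rw [gaussianReal_conv_gaussianReal, add_zero, hvar, stdNormalCdf_div (by positivity)]
end

section
/- Let m₁, m₂, a₁, a₂ be real numbers, s₁, s₂ > 0, n₁, n₂ > 0, and b₁, b₂ > 0. Then the iterated integral of the indicator 1[a₁ + b₁·y₁ > a₂ + b₂·y₂], with y₁ integrated against gaussianReal m₁ (s₁²/n₁) and y₂ integrated against gaussianReal m₂ (s₂²/n₂), equals Φ((a₁ − a₂ + b₁·m₁ − b₂·m₂) / √(b₁²·s₁²/n₁ + b₂²·s₂²/n₂)). -/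
/-!
Under the product law of `(y₁, y₂)` the event is `{-b₁ y₁ + b₂ y₂ < a₁ - a₂}`. The linear
combination `-b₁ y₁ + b₂ y₂` is the convolution of two Gaussians, hence Gaussian with mean
`b₂ m₂ - b₁ m₁` and variance `b₁² s₁²/n₁ + b₂² s₂²/n₂`; standardizing it turns the probability
of a half-line into `Φ`.
-/

open MeasureTheory Real ProbabilityTheory

open scoped NNReal

lemma gaussianPDFReal_zero_one : gaussianPDFReal 0 1 = stdNormalPdf := by
  ext x
  simp [gaussianPDFReal, stdNormalPdf, div_eq_inv_mul]

lemma measureReal_gaussianReal_zero_one_Iio (x : ℝ) :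
    (gaussianReal 0 1).real (Set.Iio x) = stdNormalCdf x := by
  rw [measureReal_def, gaussianReal_apply_eq_integral _ one_ne_zero,
    ENNReal.toReal_ofReal (setIntegral_nonneg measurableSet_Iio fun _ _ ↦
      gaussianPDFReal_nonneg ..),
    gaussianPDFReal_zero_one, stdNormalCdf, setIntegral_congr_set Iio_ae_eq_Iic]

lemma gaussianReal_eq_map_gaussianReal_zero_one (m : ℝ) (v : ℝ≥0) :
    gaussianReal m v = (gaussianReal 0 1).map (fun x ↦ m + √v * x) := by
  rw [show (fun x : ℝ ↦ m + √v * x) = (m + ·) ∘ (√v * ·) from rfl,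
    ← Measure.map_map (by fun_prop) (by fun_prop), gaussianReal_map_const_mul,
    gaussianReal_map_const_add]
  congr
  · ring
  · ext; simp

lemma measureReal_gaussianReal_Iio (m : ℝ) {v : ℝ≥0} (hv : v ≠ 0) (c : ℝ) :
    (gaussianReal m v).real (Set.Iio c) = stdNormalCdf ((c - m) / √v) := by
  have hσ : 0 < √(v : ℝ) := by positivity
  have hpre : (fun x ↦ m + √v * x) ⁻¹' Set.Iio c = Set.Iio ((c - m) / √v) := by
    ext x
    simp only [Set.mem_preimage, Set.mem_Iio, lt_div_iff₀ hσ]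
    constructor <;> intro <;> linarith
  rw [gaussianReal_eq_map_gaussianReal_zero_one, map_measureReal_apply (by fun_prop)
    measurableSet_Iio, hpre, measureReal_gaussianReal_zero_one_Iio]

lemma map_linear_prod_gaussianReal (m₁ m₂ c₁ c₂ : ℝ) (v₁ v₂ : ℝ≥0) :
    ((gaussianReal m₁ v₁).prod (gaussianReal m₂ v₂)).map (fun p ↦ c₁ * p.1 + c₂ * p.2) =
      gaussianReal (c₁ * m₁ + c₂ * m₂) ((c₁ ^ 2).toNNReal * v₁ + (c₂ ^ 2).toNNReal * v₂) := by
  rw [show (fun p : ℝ × ℝ ↦ c₁ * p.1 + c₂ * p.2) =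
      (fun p ↦ p.1 + p.2) ∘ Prod.map (c₁ * ·) (c₂ * ·) from rfl,
    ← Measure.map_map (by fun_prop) (by fun_prop),
    ← Measure.map_prod_map _ _ (by fun_prop) (by fun_prop),
    gaussianReal_map_const_mul, gaussianReal_map_const_mul,
    Real.toNNReal_of_nonneg (sq_nonneg c₁), Real.toNNReal_of_nonneg (sq_nonneg c₂)]
  exact gaussianReal_conv_gaussianReal

lemma integral_integral_indicator_one {α β : Type*} [MeasurableSpace α] [MeasurableSpace β]
    (μ : Measure α) (ν : Measure β) [IsFiniteMeasure μ] [IsFiniteMeasure ν]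
    {s : Set (α × β)} (hs : MeasurableSet s) :
    ∫ x, ∫ y, s.indicator 1 (x, y) ∂ν ∂μ = (μ.prod ν).real s := by
  rw [← integral_prod _ ((integrable_const 1).indicator hs), integral_indicator_one hs]

theorem prob_linear_score_comparison_general (m₁ m₂ a₁ a₂ s₁ s₂ n₁ n₂ b₁ b₂ : ℝ)
    (hs₂ : 0 < s₂) (hn₁ : 0 < n₁) (hn₂ : 0 < n₂)
    (hb₂ : 0 < b₂) :
    (∫ y₁, (∫ y₂, (if a₁ + b₁ * y₁ > a₂ + b₂ * y₂ then (1 : ℝ) else 0)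
          ∂(gaussianReal m₂ ((s₂ ^ 2 / n₂).toNNReal)))
        ∂(gaussianReal m₁ ((s₁ ^ 2 / n₁).toNNReal))) =
      stdNormalCdf ((a₁ - a₂ + b₁ * m₁ - b₂ * m₂) /
        Real.sqrt (b₁ ^ 2 * s₁ ^ 2 / n₁ + b₂ ^ 2 * s₂ ^ 2 / n₂)) := by
  let S : Set (ℝ × ℝ) := (fun p ↦ -b₁ * p.1 + b₂ * p.2) ⁻¹' Set.Iio (a₁ - a₂)
  have hS : MeasurableSet S := measurableSet_Iio.preimage (by fun_prop)
  have hind (y₁ y₂ : ℝ) :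
      (if a₁ + b₁ * y₁ > a₂ + b₂ * y₂ then (1 : ℝ) else 0) = S.indicator 1 (y₁, y₂) := by
    classical
    rw [Set.indicator_apply]
    refine if_congr ⟨fun h ↦ ?_, fun h ↦ ?_⟩ rfl rfl
    · simp only [S, Set.mem_preimage, Set.mem_Iio]; linarith
    · simp only [S, Set.mem_preimage, Set.mem_Iio] at h; linarith
  have hv : ((((-b₁) ^ 2).toNNReal * (s₁ ^ 2 / n₁).toNNReal +
      (b₂ ^ 2).toNNReal * (s₂ ^ 2 / n₂).toNNReal : ℝ≥0) : ℝ) =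
      b₁ ^ 2 * s₁ ^ 2 / n₁ + b₂ ^ 2 * s₂ ^ 2 / n₂ := by
    rw [NNReal.coe_add, NNReal.coe_mul, NNReal.coe_mul, Real.coe_toNNReal _ (sq_nonneg _),
      Real.coe_toNNReal _ (sq_nonneg _), Real.coe_toNNReal _ (by positivity),
      Real.coe_toNNReal _ (by positivity)]
    ring
  simp_rw [hind]
  rw [integral_integral_indicator_one _ _ hS, ← map_measureReal_apply (by fun_prop)
    measurableSet_Iio, map_linear_prod_gaussianReal,
    measureReal_gaussianReal_Iio _ (by rw [← NNReal.coe_ne_zero, hv]; positivity), hv]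
  congr 2
  ring

theorem prob_linear_score_comparison (m₁ m₂ a₁ a₂ s₁ s₂ n₁ n₂ b₁ b₂ : ℝ)
    (hs₁ : 0 < s₁) (hs₂ : 0 < s₂) (hn₁ : 0 < n₁) (hn₂ : 0 < n₂)
    (hb₁ : 0 < b₁) (hb₂ : 0 < b₂) :
    (∫ y₁, (∫ y₂, (if a₁ + b₁ * y₁ > a₂ + b₂ * y₂ then (1 : ℝ) else 0)
          ∂(gaussianReal m₂ ((s₂ ^ 2 / n₂).toNNReal)))
        ∂(gaussianReal m₁ ((s₁ ^ 2 / n₁).toNNReal))) =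
      stdNormalCdf ((a₁ - a₂ + b₁ * m₁ - b₂ * m₂) /
        Real.sqrt (b₁ ^ 2 * s₁ ^ 2 / n₁ + b₂ ^ 2 * s₂ ^ 2 / n₂)) :=
  prob_linear_score_comparison_general m₁ m₂ a₁ a₂ s₁ s₂ n₁ n₂ b₁ b₂ hs₂ hn₁ hn₂ hb₂
end

section
/- Let μ be a real number, σ > 0, s > 0, and n > 0. Let δ(y₁, y₂) = 1[y₁ > y₂]. Then the iterated integral of δ(y₁, y₂)·m₁ + (1 − δ(y₁, y₂))·m₂, where y₁ is integrated against gaussianReal m₁ (s²/n), y₂ against gaussianReal m₂ (s²/n), m₁ against gaussianReal μ σ², and m₂ against gaussianReal μ σ², equals μ + σ²/(√π·√(σ² + s²/n)), which equals μ + √2·σ²/(√π·√(2σ² + 2s²/n)). -/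
/-!
Write `d = m₁ - m₂ ~ N(0, 2σ²)` for the gap between the true means and `e ~ N(0, 2s²/n)` for the
noise in `y₁ - y₂ = d + e`. The deployed profit is `m₂ + d · 1[d + e > 0]`, so everything reduces
to `E[X; X + Y > 0] = w / √(2π(w + u))` for independent `X ~ N(0, w)`, `Y ~ N(0, u)`. With
`Z = X + Y`, the variable `uX - wY` is uncorrelated with `Z`, hence independent of it since the
pair is jointly Gaussian, and it is centred. As `(w + u) X = w Z + (uX - wY)`, we get
`E[X; Z > 0] = w / (w + u) · E[Z; Z > 0]`, and the half first moment of `N(0, w + u)` is a Gamma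
integral.
-/

open MeasureTheory Real ProbabilityTheory Set
open scoped NNReal

lemma setIntegral_Ioi_id_gaussianReal {v : ℝ≥0} (hv : v ≠ 0) :
    ∫ x in Ioi 0, x ∂gaussianReal 0 v = v / √(2 * π * v) := by
  have hv' : (0 : ℝ) < v := by positivity
  calc ∫ x in Ioi 0, x ∂gaussianReal 0 v
      = ∫ x in Ioi 0, gaussianPDFReal 0 v x * x := by
        rw [← integral_indicator measurableSet_Ioi, integral_gaussianReal_eq_integral_smul hv,
          ← integral_indicator measurableSet_Ioi]
        congr with x
        by_cases hx : x ∈ Ioi 0 <;> simp [hx]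
    _ = (√(2 * π * v))⁻¹ * ∫ x in Ioi 0, x ^ (1 : ℝ) * exp (-(2 * (v : ℝ))⁻¹ * x ^ (2 : ℝ)) := by
        rw [← integral_const_mul]
        refine setIntegral_congr_fun measurableSet_Ioi fun x _ => ?_
        simp only [gaussianPDFReal, rpow_one, rpow_two, sub_zero]
        ring_nf
    _ = v / √(2 * π * v) := by
        rw [integral_rpow_mul_exp_neg_mul_rpow two_pos (by norm_num) (by positivity)]
        norm_num [rpow_neg_one]
        field_simp

section IndependentGaussians

variable {Ω : Type*} {mΩ : MeasurableSpace Ω} {P : Measure Ω} {X Y : Ω → ℝ} {w u : ℝ≥0}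

lemma indepFun_mul_sub_mul_add_of_gaussianReal {m₁ m₂ : ℝ} (hX : HasLaw X (gaussianReal m₁ w) P)
    (hY : HasLaw Y (gaussianReal m₂ u) P) (hXY : X ⟂ᵢ[P] Y) :
    (fun ω => u * X ω - w * Y ω) ⟂ᵢ[P] (fun ω => X ω + Y ω) := by
  have := hX.isProbabilityMeasure
  have hXg := hX.hasGaussianLaw
  have hYg := hY.hasGaussianLaw
  let L : ℝ × ℝ →L[ℝ] ℝ × ℝ :=
    (ContinuousLinearMap.fst ℝ ℝ ℝ + ContinuousLinearMap.snd ℝ ℝ ℝ).prod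
      ((u : ℝ) • ContinuousLinearMap.fst ℝ ℝ ℝ - (w : ℝ) • ContinuousLinearMap.snd ℝ ℝ ℝ)
  have hgauss : HasGaussianLaw (fun ω => (X ω + Y ω, u * X ω - w * Y ω)) P :=
    (hXY.hasGaussianLaw hXg hYg).map_fun L
  refine (hgauss.indepFun_of_covariance_eq_zero ?_).symm
  have hX2 := hXg.memLp_two
  have hY2 := hYg.memLp_two
  have huX : MemLp (fun ω => u * X ω) 2 P := hX2.const_mul _
  have hwY : MemLp (fun ω => w * Y ω) 2 P := hY2.const_mul _
  have hR : MemLp (fun ω => u * X ω - w * Y ω) 2 P := huX.sub hwY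
  rw [show (fun ω => X ω + Y ω) = X + Y from rfl, covariance_add_left hX2 hY2 hR,
    covariance_fun_sub_right hX2 huX hwY, covariance_fun_sub_right hY2 huX hwY]
  simp only [covariance_const_mul_right, covariance_self hX.aemeasurable,
    covariance_self hY.aemeasurable, hX.variance_eq, hY.variance_eq, variance_id_gaussianReal,
    hXY.covariance_eq_zero hX2 hY2, hXY.symm.covariance_eq_zero hY2 hX2]
  ring

lemma setIntegral_add_pos_of_indepFun (hX : HasLaw X (gaussianReal 0 w) P)
    (hY : HasLaw Y (gaussianReal 0 u) P) (hXY : X ⟂ᵢ[P] Y) (hwu : w + u ≠ 0) :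
    ∫ ω in {ω | 0 < X ω + Y ω}, X ω ∂P = w / √(2 * π * (w + u)) := by
  have := hX.isProbabilityMeasure
  have hXi := hX.hasGaussianLaw.integrable
  have hYi := hY.hasGaussianLaw.integrable
  have hZ : HasLaw (fun ω => X ω + Y ω) (gaussianReal 0 (w + u)) P :=
    ⟨by fun_prop, by
      have := gaussianReal_add_gaussianReal_of_indepFun hXY hX.map_eq hY.map_eq
      rwa [add_zero] at this⟩
  have hS : NullMeasurableSet {ω | 0 < X ω + Y ω} P :=
    hZ.aemeasurable.nullMeasurableSet_preimage measurableSet_Ioi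
  have hZpos : ∫ ω in {ω | 0 < X ω + Y ω}, (X ω + Y ω) ∂P = (w + u) / √(2 * π * (w + u)) := by
    rw [← NNReal.coe_add, ← setIntegral_Ioi_id_gaussianReal hwu, ← hZ.map_eq,
      setIntegral_map (f := fun x => x) measurableSet_Ioi aestronglyMeasurable_id hZ.aemeasurable]
    rfl
  have hRpos : ∫ ω in {ω | 0 < X ω + Y ω}, (u * X ω - w * Y ω) ∂P = 0 := by
    have hind : (fun ω => u * X ω - w * Y ω) ⟂ᵢ[P]
        (fun ω => (Ioi (0 : ℝ)).indicator 1 (X ω + Y ω)) :=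
      (indepFun_mul_sub_mul_add_of_gaussianReal hX hY hXY).comp
        (ψ := (Ioi (0 : ℝ)).indicator (1 : ℝ → ℝ)) measurable_id
        (measurable_one.indicator measurableSet_Ioi)
    have hmean : ∫ ω, (u * X ω - w * Y ω) ∂P = 0 := by
      rw [integral_sub (hXi.const_mul _) (hYi.const_mul _), integral_const_mul, integral_const_mul,
        hX.integral_eq, hY.integral_eq, integral_id_gaussianReal, integral_id_gaussianReal]
      ring
    calc ∫ ω in {ω | 0 < X ω + Y ω}, (u * X ω - w * Y ω) ∂P
        = ∫ ω, (u * X ω - w * Y ω) * (Ioi 0).indicator 1 (X ω + Y ω) ∂P := by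
          rw [← integral_indicator₀ hS]
          congr with ω
          by_cases h : 0 < X ω + Y ω <;> simp [h]
      _ = 0 := by
          rw [hind.integral_fun_mul_eq_mul_integral (by fun_prop)
            ((measurable_one.indicator measurableSet_Ioi).comp_aemeasurable
              hZ.aemeasurable).aestronglyMeasurable, hmean, zero_mul]
  have hwu' : ((w : ℝ) + u) ≠ 0 := by exact_mod_cast hwu
  calc ∫ ω in {ω | 0 < X ω + Y ω}, X ω ∂P
      = ∫ ω in {ω | 0 < X ω + Y ω}, (w * (X ω + Y ω) + (u * X ω - w * Y ω)) / (w + u) ∂P := by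
        congr with ω
        field_simp
        ring
    _ = w / √(2 * π * (w + u)) := by
        rw [integral_div, integral_add, integral_const_mul, hZpos, hRpos, add_zero]
        · field_simp
        · exact ((hXi.add hYi).const_mul _).integrableOn
        · exact ((hXi.const_mul _).sub (hYi.const_mul _)).integrableOn

end IndependentGaussians

lemma gaussianReal_real_Ioi_zero (d : ℝ) (u : ℝ≥0) :
    (gaussianReal d u).real (Ioi 0) = (gaussianReal 0 u).real {e | 0 < d + e} := by
  have h := map_measureReal_apply (μ := gaussianReal 0 u) (measurable_const_add d)
    (measurableSet_Ioi (a := 0))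
  rwa [gaussianReal_map_const_add, zero_add] at h

lemma integral_mul_gaussianReal_real_Ioi {w u : ℝ≥0} (hwu : w + u ≠ 0) :
    ∫ d, d * (gaussianReal d u).real (Ioi 0) ∂gaussianReal 0 w = w / √(2 * π * (w + u)) := by
  let P := (gaussianReal 0 w).prod (gaussianReal 0 u)
  have hX : HasLaw Prod.fst (gaussianReal 0 w) P := ⟨by fun_prop, by simp [P]⟩
  have hY : HasLaw Prod.snd (gaussianReal 0 u) P := ⟨by fun_prop, by simp [P]⟩
  have hS : MeasurableSet {p : ℝ × ℝ | 0 < p.1 + p.2} :=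
    measurableSet_lt measurable_const (by fun_prop)
  rw [← setIntegral_add_pos_of_indepFun hX hY (indepFun_prod measurable_id measurable_id) hwu,
    ← integral_indicator hS, integral_prod _ (hX.hasGaussianLaw.integrable.indicator hS)]
  congr with d
  rw [gaussianReal_real_Ioi_zero, mul_comm, ← smul_eq_mul,
    ← integral_indicator_const _ (measurableSet_lt measurable_const (by fun_prop))]
  rfl

lemma measurable_gaussianReal_real_Ioi (v : ℝ≥0) :
    Measurable fun d => (gaussianReal d v).real (Ioi 0) :=
  (Measure.measurable_measure.1
    (measurable_gaussianReal.comp (measurable_id.prodMk measurable_const))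
    _ measurableSet_Ioi).ennreal_toReal

lemma integrable_mul_gaussianReal_real_Ioi {ν : Measure ℝ} (hν : Integrable (fun x => x) ν)
    (v : ℝ≥0) : Integrable (fun d => d * (gaussianReal d v).real (Ioi 0)) ν := by
  refine hν.norm.mono' (measurable_id.mul (measurable_gaussianReal_real_Ioi v)).aestronglyMeasurable
    (ae_of_all _ fun d => ?_)
  rw [norm_mul, Real.norm_of_nonneg measureReal_nonneg]
  exact mul_le_of_le_one_right (norm_nonneg d) measureReal_le_one

lemma integral_integral_add_comp_sub {G : Type*} [MeasurableSpace G] [Sub G] [MeasurableSub₂ G]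
    {μ ν : Measure G} [IsProbabilityMeasure μ] [IsProbabilityMeasure ν] {φ f : G → ℝ}
    (hφ : Integrable φ ν) (hf : Integrable f ((μ.prod ν).map fun p => p.1 - p.2)) :
    ∫ x, ∫ y, (φ y + f (x - y)) ∂ν ∂μ =
      ∫ y, φ y ∂ν + ∫ z, f z ∂(μ.prod ν).map fun p => p.1 - p.2 := by
  have hsub : Measurable fun p : G × G => p.1 - p.2 := measurable_fst.sub measurable_snd
  have hfp : Integrable (fun p : G × G => f (p.1 - p.2)) (μ.prod ν) :=
    (integrable_map_measure hf.aestronglyMeasurable hsub.aemeasurable).1 hf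
  calc ∫ x, ∫ y, (φ y + f (x - y)) ∂ν ∂μ
      = ∫ p, (φ p.2 + f (p.1 - p.2)) ∂μ.prod ν :=
        (integral_prod _ ((hφ.comp_snd μ).add hfp)).symm
    _ = _ := by
        rw [integral_add (hφ.comp_snd μ) hfp, integral_fun_snd,
          integral_map hsub.aemeasurable hf.aestronglyMeasurable, probReal_univ, one_smul]

lemma gaussianReal_prod_map_sub (m₁ m₂ : ℝ) (v₁ v₂ : ℝ≥0) :
    ((gaussianReal m₁ v₁).prod (gaussianReal m₂ v₂)).map (fun p => p.1 - p.2) =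
      gaussianReal (m₁ - m₂) (v₁ + v₂) := by
  have hindep := indepFun_prod (μ := gaussianReal m₁ v₁) (ν := gaussianReal m₂ v₂)
    measurable_id measurable_neg
  have hsum := gaussianReal_add_gaussianReal_of_indepFun (m₁ := m₁) (m₂ := -m₂) (v₁ := v₁)
    (v₂ := v₂) hindep (by simp) ?_
  · simp only [sub_eq_add_neg]
    exact hsum
  · change Measure.map (Neg.neg ∘ Prod.snd) _ = _
    rw [← Measure.map_map measurable_neg measurable_snd]
    simpa using gaussianReal_map_neg

lemma integral_integral_gaussianReal_ite_gt (m₁ m₂ : ℝ) (v₁ v₂ : ℝ≥0) :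
    ∫ y₁, ∫ y₂, ((if y₁ > y₂ then (1 : ℝ) else 0) * m₁ + (1 - if y₁ > y₂ then (1 : ℝ) else 0) * m₂)
        ∂gaussianReal m₂ v₂ ∂gaussianReal m₁ v₁ =
      m₂ + (m₁ - m₂) * (gaussianReal (m₁ - m₂) (v₁ + v₂)).real (Ioi 0) := by
  have hpayoff : ∀ y₁ y₂ : ℝ,
      (if y₁ > y₂ then (1 : ℝ) else 0) * m₁ + (1 - if y₁ > y₂ then (1 : ℝ) else 0) * m₂ =
        m₂ + (Ioi 0).indicator (fun _ => m₁ - m₂) (y₁ - y₂) := by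
    intro y₁ y₂
    by_cases h : y₂ < y₁ <;> simp [h]
  simp only [hpayoff]
  rw [integral_integral_add_comp_sub (integrable_const _)
      ((integrable_const _).indicator measurableSet_Ioi), gaussianReal_prod_map_sub,
    integral_const, integral_indicator_const _ measurableSet_Ioi]
  simp [mul_comm]

theorem expected_roll_profit_symmetric_general (μ σ s n : ℝ)
    (hσ : 0 < σ) (hn : 0 < n) :
    (∫ m₁, (∫ m₂, (∫ y₁, (∫ y₂,
            ((if y₁ > y₂ then (1 : ℝ) else 0) * m₁ +
              (1 - (if y₁ > y₂ then (1 : ℝ) else 0)) * m₂)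
              ∂(gaussianReal m₂ ((s ^ 2 / n).toNNReal)))
            ∂(gaussianReal m₁ ((s ^ 2 / n).toNNReal)))
          ∂(gaussianReal μ ((σ ^ 2).toNNReal)))
        ∂(gaussianReal μ ((σ ^ 2).toNNReal))) =
      μ + σ ^ 2 / (Real.sqrt Real.pi * Real.sqrt (σ ^ 2 + s ^ 2 / n)) ∧
    μ + σ ^ 2 / (Real.sqrt Real.pi * Real.sqrt (σ ^ 2 + s ^ 2 / n)) =
      μ + Real.sqrt 2 * σ ^ 2 /
        (Real.sqrt Real.pi * Real.sqrt (2 * σ ^ 2 + 2 * s ^ 2 / n)) := by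
  set S := (σ ^ 2).toNNReal
  set V := (s ^ 2 / n).toNNReal
  have hSV : S + S + (V + V) ≠ 0 := by simp [S, hσ.ne']
  have houter := integral_integral_add_comp_sub (μ := gaussianReal μ S) (ν := gaussianReal μ S)
    (φ := fun y => y) (f := fun d => d * (gaussianReal d (V + V)).real (Ioi 0))
    IsGaussian.integrable_fun_id (by
      rw [gaussianReal_prod_map_sub]
      exact integrable_mul_gaussianReal_real_Ioi IsGaussian.integrable_fun_id _)
  simp only [integral_integral_gaussianReal_ite_gt, houter, gaussianReal_prod_map_sub,
    integral_id_gaussianReal, sub_self, integral_mul_gaussianReal_real_Ioi hSV]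
  have hScoe : (S : ℝ) = σ ^ 2 := Real.coe_toNNReal _ (sq_nonneg σ)
  have hVcoe : (V : ℝ) = s ^ 2 / n := Real.coe_toNNReal _ (by positivity)
  have hpos : 0 < σ ^ 2 + s ^ 2 / n := by positivity
  push_cast [hScoe, hVcoe]
  constructor
  · rw [show 2 * π * (σ ^ 2 + σ ^ 2 + (s ^ 2 / n + s ^ 2 / n)) =
      2 ^ 2 * π * (σ ^ 2 + s ^ 2 / n) by ring, sqrt_mul (by positivity), sqrt_mul (by positivity),
      sqrt_sq zero_le_two]
    field_simp
    ring
  · rw [show 2 * σ ^ 2 + 2 * s ^ 2 / n = 2 * (σ ^ 2 + s ^ 2 / n) by ring, sqrt_mul zero_le_two]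
    field_simp

theorem expected_roll_profit_symmetric (μ σ s n : ℝ)
    (hσ : 0 < σ) (hs : 0 < s) (hn : 0 < n) :
    (∫ m₁, (∫ m₂, (∫ y₁, (∫ y₂,
            ((if y₁ > y₂ then (1 : ℝ) else 0) * m₁ +
              (1 - (if y₁ > y₂ then (1 : ℝ) else 0)) * m₂)
              ∂(gaussianReal m₂ ((s ^ 2 / n).toNNReal)))
            ∂(gaussianReal m₁ ((s ^ 2 / n).toNNReal)))
          ∂(gaussianReal μ ((σ ^ 2).toNNReal)))
        ∂(gaussianReal μ ((σ ^ 2).toNNReal))) =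
      μ + σ ^ 2 / (Real.sqrt Real.pi * Real.sqrt (σ ^ 2 + s ^ 2 / n)) ∧
    μ + σ ^ 2 / (Real.sqrt Real.pi * Real.sqrt (σ ^ 2 + s ^ 2 / n)) =
      μ + Real.sqrt 2 * σ ^ 2 /
        (Real.sqrt Real.pi * Real.sqrt (2 * σ ^ 2 + 2 * s ^ 2 / n)) :=
  expected_roll_profit_symmetric_general μ σ s n hσ hn
end

section
/- Let N > 0, s > 0, σ > 0 and μ be real numbers, and define Π(n) = N·μ + (N − 2n)·σ²/(√π·√(σ² + s²/n)) for n > 0, and n* = √(N·s²/(4σ²) + (3s²/(4σ²))²) − 3s²/(4σ²). Then 0 < n* < N/2 and for every n with 0 < n ≤ N/2, Π(n) ≤ Π(n*). -/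
open Real

/-!
Up to the affine map `x ↦ N μ + σ² / √π · x`, the profit is `g n = (N - 2n) / √(σ² + s²/n)`.
The first-order condition for `g` is `4σ² n² + 6 s² n = N s²`, whose positive root is `n*`.
Given that relation, `g(n*)² - g(n)²` factors (after clearing denominators) as
`4 (σ² n* + s²) (n - n*)² (N - 2n* - n)`, which is nonnegative on `0 < n ≤ N/2` because the
relation also forces `n* < N/6`.
-/

lemma sqrt_add_sq_sub_pos {a b : ℝ} (ha : 0 ≤ a) (hb : 0 < b) : 0 < √(b + a ^ 2) - a := by
  have : a < √(b + a ^ 2) := (lt_sqrt ha).2 (by linarith)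
  linarith

lemma sqrt_add_sq_sub_sq_add_two_mul {a b : ℝ} (h : 0 ≤ b + a ^ 2) :
    (√(b + a ^ 2) - a) ^ 2 + 2 * a * (√(b + a ^ 2) - a) = b := by
  linear_combination sq_sqrt h

lemma div_sqrt_le_div_sqrt_of_sq_div_le {u v A B : ℝ} (hv : 0 ≤ v)
    (h : u ^ 2 / A ≤ v ^ 2 / B) : u / √A ≤ v / √B :=
  calc u / √A ≤ |u| / √A := div_le_div_of_nonneg_right (le_abs_self u) (sqrt_nonneg A)
    _ = √(u ^ 2 / A) := by rw [sqrt_div (sq_nonneg u), sqrt_sq_eq_abs]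
    _ ≤ √(v ^ 2 / B) := sqrt_le_sqrt h
    _ = v / √B := by rw [sqrt_div (sq_nonneg v), sqrt_sq hv]

lemma sq_div_le_sq_div_of_first_order {N s σ m n : ℝ} (hσ : σ ≠ 0) (hm : 0 < m)
    (hfoc : 4 * σ ^ 2 * m ^ 2 + 6 * s ^ 2 * m = N * s ^ 2) (hn : 0 < n) (hnm : n ≤ N - 2 * m) :
    (N - 2 * n) ^ 2 / (σ ^ 2 + s ^ 2 / n) ≤ (N - 2 * m) ^ 2 / (σ ^ 2 + s ^ 2 / m) := by
  have hden : ∀ x, 0 < x → σ ^ 2 + s ^ 2 / x = (σ ^ 2 * x + s ^ 2) / x := fun x hx => by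
    field_simp
  rw [hden n hn, hden m hm, div_div_eq_mul_div, div_div_eq_mul_div,
    div_le_div_iff₀ (by positivity) (by positivity)]
  have hgap : (N - 2 * m) ^ 2 * m * (σ ^ 2 * n + s ^ 2) - (N - 2 * n) ^ 2 * n * (σ ^ 2 * m + s ^ 2)
      = 4 * (σ ^ 2 * m + s ^ 2) * (n - m) ^ 2 * (N - 2 * m - n) := by
    linear_combination (n - m) * (N - 2 * m) * hfoc
  have : 0 ≤ 4 * (σ ^ 2 * m + s ^ 2) * (n - m) ^ 2 * (N - 2 * m - n) :=
    mul_nonneg (by positivity) (by linarith)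
  linarith

theorem profit_maximizing_sample_size (N s σ μ : ℝ)
    (hN : 0 < N) (hs : 0 < s) (hσ : 0 < σ)
    (Profit : ℝ → ℝ)
    (hProfit : ∀ n, Profit n = N * μ + (N - 2 * n) * σ ^ 2 /
      (Real.sqrt Real.pi * Real.sqrt (σ ^ 2 + s ^ 2 / n)))
    (nstar : ℝ)
    (hnstar : nstar = Real.sqrt (N * s ^ 2 / (4 * σ ^ 2) +
      (3 * s ^ 2 / (4 * σ ^ 2)) ^ 2) - 3 * s ^ 2 / (4 * σ ^ 2)) :
    (0 < nstar ∧ nstar < N / 2) ∧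
      ∀ n, 0 < n → n ≤ N / 2 → Profit n ≤ Profit nstar := by
  have hpos : 0 < nstar := hnstar ▸ sqrt_add_sq_sub_pos (by positivity) (by positivity)
  have hfoc : 4 * σ ^ 2 * nstar ^ 2 + 6 * s ^ 2 * nstar = N * s ^ 2 := by
    have h := sqrt_add_sq_sub_sq_add_two_mul
      (a := 3 * s ^ 2 / (4 * σ ^ 2)) (b := N * s ^ 2 / (4 * σ ^ 2)) (by positivity)
    rw [← hnstar] at h
    field_simp at h
    linear_combination h
  have hsixth : nstar < N / 6 := by nlinarith [mul_pos (pow_pos hσ 2) (mul_pos hpos hpos)]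
  refine ⟨⟨hpos, by linarith⟩, fun n hn hnN => ?_⟩
  have key := div_sqrt_le_div_sqrt_of_sq_div_le (by linarith)
    (sq_div_le_sq_div_of_first_order hσ.ne' hpos hfoc hn (by linarith))
  calc Profit n = N * μ + σ ^ 2 / √π * ((N - 2 * n) / √(σ ^ 2 + s ^ 2 / n)) := by
        rw [hProfit]; ring
    _ ≤ N * μ + σ ^ 2 / √π * ((N - 2 * nstar) / √(σ ^ 2 + s ^ 2 / nstar)) := by gcongr
    _ = Profit nstar := by rw [hProfit]; ring
end

section
/- Let N > 0, s > 0, σ > 0 and μ be real numbers, and define Π(n) = N·μ + (N − 2n)·σ²/(√π·√(σ² + s²/n)). Then for every n > 0, Π is differentiable at n with derivative Π'(n) = σ²·√(σ² + s²/n)·(N·s² − 4n²·σ² − 6n·s²)/(2·√π·(n·σ² + s²)²). In particular the critical points of Π on (0, ∞) are exactly the positive roots of 4n²·σ² + 6n·s² − N·s² = 0. -/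
open Real

/-! Writing A = √(σ² + s²/n), the quotient rule gives
Π'(n) = σ² ((N − 2n) s² − 4n² A²) / (2√π n² A³), and the identity n A² = nσ² + s²
turns this into the stated form. Its zeros are those of the last factor, since every
other factor is positive. -/

theorem hasDerivAt_sqrt_add_div {a b x : ℝ} (hx : x ≠ 0) (h : a + b / x ≠ 0) :
    HasDerivAt (fun y => √(a + b / y)) (-b / x ^ 2 / (2 * √(a + b / x))) x := by
  have hinner : HasDerivAt (fun y => a + b / y) (-b / x ^ 2) x := by
    simpa [div_eq_mul_inv, neg_div] using ((hasDerivAt_inv hx).const_mul b).const_add a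
  exact hinner.sqrt h

noncomputable def testRollProfit (N s σ μ n : ℝ) : ℝ :=
  N * μ + (N - 2 * n) * σ ^ 2 / (√π * √(σ ^ 2 + s ^ 2 / n))

noncomputable def testRollProfitDeriv (N s σ n : ℝ) : ℝ :=
  σ ^ 2 * √(σ ^ 2 + s ^ 2 / n) * (N * s ^ 2 - 4 * n ^ 2 * σ ^ 2 - 6 * n * s ^ 2) /
    (2 * √π * (n * σ ^ 2 + s ^ 2) ^ 2)

section
variable {N s σ n : ℝ}

theorem sq_sqrt_add_div_mul (hn : 0 < n) :
    √(σ ^ 2 + s ^ 2 / n) ^ 2 * n = n * σ ^ 2 + s ^ 2 := by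
  rw [sq_sqrt (by positivity)]
  field_simp

theorem hasDerivAt_testRollProfit (μ : ℝ) (hn : 0 < n) (hσ : σ ≠ 0) :
    HasDerivAt (testRollProfit N s σ μ) (testRollProfitDeriv N s σ n) n := by
  have hg : 0 < σ ^ 2 + s ^ 2 / n := by positivity
  have hA : 0 < √(σ ^ 2 + s ^ 2 / n) := sqrt_pos.2 hg
  have hB : 0 < √π := sqrt_pos.2 pi_pos
  have hnum : HasDerivAt (fun x => (N - 2 * x) * σ ^ 2) (-2 * σ ^ 2) n := by
    simpa using (((hasDerivAt_id n).const_mul 2).const_sub N).mul_const (σ ^ 2)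
  have hden := (hasDerivAt_sqrt_add_div (a := σ ^ 2) (b := s ^ 2) hn.ne' hg.ne').const_mul √π
  refine ((hnum.div hden (by positivity)).const_add (N * μ)).congr_deriv ?_
  have hAn := sq_sqrt_add_div_mul (σ := σ) (s := s) hn
  unfold testRollProfitDeriv
  set A := √(σ ^ 2 + s ^ 2 / n)
  rw [← hAn]
  field_simp
  linear_combination (-4 * n) * hAn

theorem testRollProfitDeriv_eq_zero_iff (hn : 0 < n) (hσ : σ ≠ 0) :
    testRollProfitDeriv N s σ n = 0 ↔ 4 * n ^ 2 * σ ^ 2 + 6 * n * s ^ 2 - N * s ^ 2 = 0 := by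
  have hA : 0 < √(σ ^ 2 + s ^ 2 / n) := sqrt_pos.2 (by positivity)
  have hden : 2 * √π * (n * σ ^ 2 + s ^ 2) ^ 2 ≠ 0 := by positivity
  rw [testRollProfitDeriv, div_eq_zero_iff, or_iff_left hden, mul_eq_zero,
    or_iff_right (by positivity)]
  constructor <;> intro h <;> linarith

end

theorem profit_derivative_general (N s σ μ : ℝ)
    (hσ : 0 < σ)
    (Profit : ℝ → ℝ)
    (hProfit : ∀ n, Profit n = N * μ + (N - 2 * n) * σ ^ 2 /
      (Real.sqrt Real.pi * Real.sqrt (σ ^ 2 + s ^ 2 / n))) :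
    ∀ n, 0 < n →
      HasDerivAt Profit
        (σ ^ 2 * Real.sqrt (σ ^ 2 + s ^ 2 / n) * (N * s ^ 2 - 4 * n ^ 2 * σ ^ 2 - 6 * n * s ^ 2) /
          (2 * Real.sqrt Real.pi * (n * σ ^ 2 + s ^ 2) ^ 2)) n ∧
      (σ ^ 2 * Real.sqrt (σ ^ 2 + s ^ 2 / n) * (N * s ^ 2 - 4 * n ^ 2 * σ ^ 2 - 6 * n * s ^ 2) /
          (2 * Real.sqrt Real.pi * (n * σ ^ 2 + s ^ 2) ^ 2) = 0 ↔
        4 * n ^ 2 * σ ^ 2 + 6 * n * s ^ 2 - N * s ^ 2 = 0) := by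
  obtain rfl : Profit = testRollProfit N s σ μ := funext hProfit
  intro n hn
  exact ⟨hasDerivAt_testRollProfit μ hn hσ.ne', testRollProfitDeriv_eq_zero_iff hn hσ.ne'⟩

theorem profit_derivative (N s σ μ : ℝ)
    (hN : 0 < N) (hs : 0 < s) (hσ : 0 < σ)
    (Profit : ℝ → ℝ)
    (hProfit : ∀ n, Profit n = N * μ + (N - 2 * n) * σ ^ 2 /
      (Real.sqrt Real.pi * Real.sqrt (σ ^ 2 + s ^ 2 / n))) :
    ∀ n, 0 < n →
      HasDerivAt Profit
        (σ ^ 2 * Real.sqrt (σ ^ 2 + s ^ 2 / n) * (N * s ^ 2 - 4 * n ^ 2 * σ ^ 2 - 6 * n * s ^ 2) /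
          (2 * Real.sqrt Real.pi * (n * σ ^ 2 + s ^ 2) ^ 2)) n ∧
      (σ ^ 2 * Real.sqrt (σ ^ 2 + s ^ 2 / n) * (N * s ^ 2 - 4 * n ^ 2 * σ ^ 2 - 6 * n * s ^ 2) /
          (2 * Real.sqrt Real.pi * (n * σ ^ 2 + s ^ 2) ^ 2) = 0 ↔
        4 * n ^ 2 * σ ^ 2 + 6 * n * s ^ 2 - N * s ^ 2 = 0) :=
  profit_derivative_general N s σ μ hσ Profit hProfit
end

section
/- Let μ be a real number and σ > 0. Then the iterated integral of max(m₁, m₂), where m₁ and m₂ are each integrated against gaussianReal μ σ², equals μ + σ/√π. -/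
/-!
Since `max x y = (x + y + |x - y|) / 2`, the expected maximum is `μ` plus half the mean absolute
value of `X - Y`, which is a centred Gaussian of variance `2σ²` (the convolution of `N(μ, σ²)` and
`N(-μ, σ²)`). A centred Gaussian of variance `s²` has mean absolute value `s √(2 / π)`.
-/

open MeasureTheory Real ProbabilityTheory

open Set in
theorem integral_abs_mul_exp_neg_mul_sq {b : ℝ} (hb : 0 < b) :
    ∫ x : ℝ, |x| * exp (-b * x ^ 2) = b⁻¹ := by
  have hIoi : ∫ x in Ioi (0 : ℝ), x * exp (-b * x ^ 2) = (2 * b)⁻¹ := by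
    have h := integral_rpow_mul_exp_neg_mul_rpow two_pos (by norm_num : (-1 : ℝ) < 1) hb
    simpa [Real.Gamma_two, rpow_neg_one, mul_comm] using h
  have hsymm := integral_comp_abs (f := fun x => x * exp (-b * x ^ 2))
  simp only [sq_abs] at hsymm
  rw [hsymm, hIoi]
  field_simp

theorem integral_abs_centered_gaussianReal (v : NNReal) :
    ∫ x, |x| ∂gaussianReal 0 v = √(2 * v / π) := by
  rcases eq_or_ne v 0 with rfl | hv
  · simp [gaussianReal_zero_var]
  rw [integral_gaussianReal_eq_integral_smul hv]
  have hv' : (0 : ℝ) < v := by positivity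
  calc ∫ x, gaussianPDFReal 0 v x • |x|
      = ∫ x, (√(2 * π * v))⁻¹ * (|x| * exp (-(2 * v : ℝ)⁻¹ * x ^ 2)) := by
        congr with x
        rw [gaussianPDFReal, smul_eq_mul, sub_zero]
        ring_nf
    _ = √(2 * v / π) := by
        rw [integral_const_mul, integral_abs_mul_exp_neg_mul_sq (by positivity), inv_inv,
          eq_comm, sqrt_eq_iff_mul_self_eq_of_pos (by positivity)]
        field_simp
        rw [sq_sqrt (by positivity)]

theorem max_eq_add_add_abs_sub_div_two {K : Type*} [Field K] [LinearOrder K]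
    [IsStrictOrderedRing K] (a b : K) : max a b = (a + b + |a - b|) / 2 := by
  rcases le_total a b with h | h
  · rw [max_eq_right h, abs_of_nonpos (sub_nonpos.mpr h)]; ring
  · rw [max_eq_left h, abs_of_nonneg (sub_nonneg.mpr h)]; ring

theorem integral_integral_max {ν₁ ν₂ : Measure ℝ} [IsProbabilityMeasure ν₁]
    [IsProbabilityMeasure ν₂] (h₁ : Integrable (fun x => x) ν₁) (h₂ : Integrable (fun x => x) ν₂) :
    ∫ x, ∫ y, max x y ∂ν₂ ∂ν₁ =
      ((∫ x, x ∂ν₁) + (∫ y, y ∂ν₂) + ∫ p, |p.1 - p.2| ∂ν₁.prod ν₂) / 2 := by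
  have hfst : Integrable (fun p : ℝ × ℝ => p.1) (ν₁.prod ν₂) := h₁.comp_fst ν₂
  have hsnd : Integrable (fun p : ℝ × ℝ => p.2) (ν₁.prod ν₂) := h₂.comp_snd ν₁
  have habs : Integrable (fun p : ℝ × ℝ => |p.1 - p.2|) (ν₁.prod ν₂) := (hfst.sub hsnd).abs
  have hmax : (fun p : ℝ × ℝ => max p.1 p.2) = fun p => (p.1 + p.2 + |p.1 - p.2|) / 2 :=
    funext fun p => max_eq_add_add_abs_sub_div_two p.1 p.2
  rw [integral_integral (f := fun x y => max x y), hmax, integral_div,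
    integral_add (hfst.fun_add hsnd) habs, integral_add hfst hsnd,
    integral_fun_fst (f := fun x => x), integral_fun_snd (f := fun y => y)]
  · simp
  · change Integrable (fun p : ℝ × ℝ => max p.1 p.2) _
    rw [hmax]
    exact ((hfst.fun_add hsnd).fun_add habs).div_const 2

theorem map_sub_prod_gaussianReal (m₁ m₂ : ℝ) (v₁ v₂ : NNReal) :
    ((gaussianReal m₁ v₁).prod (gaussianReal m₂ v₂)).map (fun p => p.1 - p.2) =
      gaussianReal (m₁ - m₂) (v₁ + v₂) := by
  have hsub : (fun p : ℝ × ℝ => p.1 - p.2) = (fun p => p.1 + p.2) ∘ Prod.map id (fun y => -y) := by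
    ext p; simp [sub_eq_add_neg]
  rw [hsub, ← Measure.map_map (by fun_prop) (by fun_prop),
    ← Measure.map_prod_map _ _ measurable_id measurable_neg, Measure.map_id, gaussianReal_map_neg,
    ← Measure.conv, gaussianReal_conv_gaussianReal, sub_eq_add_neg]

theorem expected_max_two_iid_gaussians (μ σ : ℝ) (hσ : 0 < σ) :
    (∫ m₁, (∫ m₂, max m₁ m₂ ∂(gaussianReal μ ((σ ^ 2).toNNReal)))
        ∂(gaussianReal μ ((σ ^ 2).toNNReal))) =
      μ + σ / Real.sqrt Real.pi := by
  set v := (σ ^ 2).toNNReal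
  have hint : Integrable (fun x => x) (gaussianReal μ v) :=
    memLp_one_iff_integrable.mp (memLp_id_gaussianReal 1)
  have hdiff :
      ∫ p, |p.1 - p.2| ∂(gaussianReal μ v).prod (gaussianReal μ v) = √(2 * (v + v) / π) := by
    rw [← integral_map (by fun_prop) (by fun_prop), map_sub_prod_gaussianReal, sub_self,
      integral_abs_centered_gaussianReal, NNReal.coe_add]
  have hv : (v : ℝ) = σ ^ 2 := Real.coe_toNNReal _ (sq_nonneg σ)
  have hsqrt : √(2 * (σ ^ 2 + σ ^ 2) / π) = 2 * σ / √π := by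
    rw [sqrt_div' _ pi_nonneg, show 2 * (σ ^ 2 + σ ^ 2) = (2 * σ) ^ 2 by ring,
      sqrt_sq (by positivity)]
  rw [integral_integral_max hint hint, integral_id_gaussianReal, hdiff, hv, hsqrt]
  ring
end

section
/- Let N ≥ 2, s > 0, σ > 0, μ be real, z > 0 and d > 0, and let n_FPC = 2·z²·s²·N/((N − 1)·d² + 4·s²·z²) be the hypothesis-test sample size with finite population correction. Let Reg(n) = N·(μ + σ/√π) − (N·μ + (N − 2n)·σ²/(√π·√(σ² + s²/n))). Then Reg(n_FPC) > N·(σ/√π)·d²/(2·(4·z²·σ² + d²)). In particular the regret from using the finite-population-corrected hypothesis-test sample size grows at least linearly in N. -/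
/-!
Write `b = √(σ² + s²/n)` and `x = s²/n`. Then `√π · Reg n = Nσ(1 - σ/b) + 2nσ²/b`, and
`1 - σ/b ≥ (b² - σ²)/(2b²) = x/(2(σ² + x))`, the difference being `(b - σ)²/(2b²)`.
The right-hand side increases with `x`, and for `N ≥ 2` the hypothesis-test size has
`s²/n_FPC > d²/(4z²)`, a bound independent of `N`; at `x = d²/(4z²)` it equals
`d²/(2(4z²σ² + d²))`.
-/

open Real

noncomputable def fpcSampleSize (N s z d : ℝ) : ℝ :=
  2 * z ^ 2 * s ^ 2 * N / ((N - 1) * d ^ 2 + 4 * s ^ 2 * z ^ 2)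

section FPC

variable {N s z : ℝ} (d : ℝ) (hN : 2 ≤ N) (hs : s ≠ 0) (hz : z ≠ 0)
include hN hs hz

lemma fpcSampleSize_denominator_pos : 0 < (N - 1) * d ^ 2 + 4 * s ^ 2 * z ^ 2 := by
  have : 0 ≤ (N - 1) * d ^ 2 := mul_nonneg (by linarith) (sq_nonneg d)
  positivity

lemma fpcSampleSize_pos : 0 < fpcSampleSize N s z d := by
  have := fpcSampleSize_denominator_pos d hN hs hz
  unfold fpcSampleSize
  positivity

lemma div_lt_sq_div_fpcSampleSize : d ^ 2 / (4 * z ^ 2) < s ^ 2 / fpcSampleSize N s z d := by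
  have hN0 : N ≠ 0 := by linarith
  have hratio : s ^ 2 / fpcSampleSize N s z d =
      ((N - 1) * d ^ 2 + 4 * s ^ 2 * z ^ 2) / (2 * z ^ 2 * N) := by
    unfold fpcSampleSize
    field_simp
  rw [hratio, div_lt_div_iff₀ (by positivity) (by positivity)]
  have hgap : 0 < 2 * z ^ 2 * ((N - 2) * d ^ 2) + 16 * s ^ 2 * z ^ 4 := by
    have : 0 ≤ (N - 2) * d ^ 2 := mul_nonneg (by linarith) (sq_nonneg d)
    positivity
  linarith [show ((N - 1) * d ^ 2 + 4 * s ^ 2 * z ^ 2) * (4 * z ^ 2) - d ^ 2 * (2 * z ^ 2 * N) =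
    2 * z ^ 2 * ((N - 2) * d ^ 2) + 16 * s ^ 2 * z ^ 4 by ring]

end FPC

lemma sq_sub_sq_div_two_mul_sq_le_one_sub_div (a b : ℝ) :
    (b ^ 2 - a ^ 2) / (2 * b ^ 2) ≤ 1 - a / b := by
  rcases eq_or_ne b 0 with rfl | hb
  · simp
  rw [div_le_iff₀ (by positivity)]
  have hdiff : (1 - a / b) * (2 * b ^ 2) - (b ^ 2 - a ^ 2) = (b - a) ^ 2 := by
    field_simp
    ring
  linarith [sq_nonneg (b - a), hdiff]

lemma div_two_mul_add_le_one_sub_div_sqrt {σ δ x : ℝ} (hσ : 0 < σ) (hδ : 0 ≤ δ)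
    (hδx : δ ≤ x) :
    δ / (2 * (σ ^ 2 + δ)) ≤ 1 - σ / √(σ ^ 2 + x) := by
  have hb : √(σ ^ 2 + δ) ^ 2 = σ ^ 2 + δ := sq_sqrt (by positivity)
  calc δ / (2 * (σ ^ 2 + δ)) = (√(σ ^ 2 + δ) ^ 2 - σ ^ 2) / (2 * √(σ ^ 2 + δ) ^ 2) := by
        rw [hb]
        ring
    _ ≤ 1 - σ / √(σ ^ 2 + δ) := sq_sub_sq_div_two_mul_sq_le_one_sub_div _ _
    _ ≤ 1 - σ / √(σ ^ 2 + x) := by gcongr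

theorem regret_fpc_hypothesis_test_lower_bound_general (N s σ μ z d : ℝ)
    (hN : 2 ≤ N) (hs : 0 < s) (hσ : 0 < σ) (hz : 0 < z)
    (nFPC : ℝ)
    (hnFPC : nFPC = 2 * z ^ 2 * s ^ 2 * N / ((N - 1) * d ^ 2 + 4 * s ^ 2 * z ^ 2))
    (Reg : ℝ → ℝ)
    (hReg : ∀ n, Reg n = N * (μ + σ / Real.sqrt Real.pi) -
      (N * μ + (N - 2 * n) * σ ^ 2 /
        (Real.sqrt Real.pi * Real.sqrt (σ ^ 2 + s ^ 2 / n)))) :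
    Reg nFPC > N * (σ / Real.sqrt Real.pi) * d ^ 2 / (2 * (4 * z ^ 2 * σ ^ 2 + d ^ 2)) := by
  change nFPC = fpcSampleSize N s z d at hnFPC
  have hn : 0 < nFPC := hnFPC ▸ fpcSampleSize_pos d hN hs.ne' hz.ne'
  have hratio : d ^ 2 / (4 * z ^ 2) ≤ s ^ 2 / nFPC :=
    (hnFPC ▸ div_lt_sq_div_fpcSampleSize d hN hs.ne' hz.ne').le
  set b := √(σ ^ 2 + s ^ 2 / nFPC) with hb_def
  have hb : 0 < b := sqrt_pos.2 (by positivity)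
  calc N * (σ / √π) * d ^ 2 / (2 * (4 * z ^ 2 * σ ^ 2 + d ^ 2))
      = N * σ * (d ^ 2 / (4 * z ^ 2) / (2 * (σ ^ 2 + d ^ 2 / (4 * z ^ 2)))) / √π := by
        field_simp
    _ ≤ N * σ * (1 - σ / b) / √π := by
        gcongr
        exact div_two_mul_add_le_one_sub_div_sqrt hσ (by positivity) hratio
    _ < (N * σ * (1 - σ / b) + 2 * nFPC * σ ^ 2 / b) / √π := by
        gcongr
        exact lt_add_of_pos_right _ (by positivity)
    _ = Reg nFPC := by
        rw [hReg, ← hb_def]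
        field_simp
        ring

theorem regret_fpc_hypothesis_test_lower_bound (N s σ μ z d : ℝ)
    (hN : 2 ≤ N) (hs : 0 < s) (hσ : 0 < σ) (hz : 0 < z) (hd : 0 < d)
    (nFPC : ℝ)
    (hnFPC : nFPC = 2 * z ^ 2 * s ^ 2 * N / ((N - 1) * d ^ 2 + 4 * s ^ 2 * z ^ 2))
    (Reg : ℝ → ℝ)
    (hReg : ∀ n, Reg n = N * (μ + σ / Real.sqrt Real.pi) -
      (N * μ + (N - 2 * n) * σ ^ 2 /
        (Real.sqrt Real.pi * Real.sqrt (σ ^ 2 + s ^ 2 / n)))) :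
    Reg nFPC > N * (σ / Real.sqrt Real.pi) * d ^ 2 / (2 * (4 * z ^ 2 * σ ^ 2 + d ^ 2)) :=
  regret_fpc_hypothesis_test_lower_bound_general N s σ μ z d hN hs hσ hz nFPC hnFPC Reg hReg
end

section
/- Let N > 0, s > 0 and μ > 0. For σ > 0 define n*(σ) = √(N·s²/(4σ²) + (3s²/(4σ²))²) − 3s²/(4σ²) and the relative regret R(σ) = [N·(μ + σ/√π) − (N·μ + (N − 2·n*(σ))·σ²/(√π·√(σ² + s²/n*(σ))))] / (N·(μ + σ/√π)). Then R(σ) tends to 0 as σ tends to 0 from the right. -/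
/-! Rationalising, n*(σ) = (N/3)/(√(1 + 4Nσ²/(9s²)) + 1), which tends to N/6 as σ → 0. The relative
regret, as a function of the pair (σ, n), is continuous at (0, N/6) and vanishes at σ = 0, so it
tends to 0 along (σ, n*(σ)). -/

open Real Filter Topology

theorem sqrt_add_sq_sub_eq_div {a b : ℝ} (hb : 0 < b) (hab : 0 ≤ a / b ^ 2 + 1) :
    √(a + b ^ 2) - b = a / b / (√(a / b ^ 2 + 1) + 1) := by
  have hsqrt : √(a + b ^ 2) = b * √(a / b ^ 2 + 1) := by
    rw [← sqrt_sq hb.le, ← sqrt_mul (sq_nonneg b), sqrt_sq hb.le]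
    field_simp
  rw [hsqrt, eq_div_iff (by positivity)]
  calc (b * √(a / b ^ 2 + 1) - b) * (√(a / b ^ 2 + 1) + 1)
      = b * (√(a / b ^ 2 + 1) ^ 2 - 1) := by ring
    _ = a / b := by rw [sq_sqrt hab]; field_simp; ring

noncomputable def optimalTestSize (N s σ : ℝ) : ℝ :=
  √(N * s ^ 2 / (4 * σ ^ 2) + (3 * s ^ 2 / (4 * σ ^ 2)) ^ 2) - 3 * s ^ 2 / (4 * σ ^ 2)

noncomputable def relativeRegret (N μ s σ n : ℝ) : ℝ :=
  (N * (μ + σ / √π) - (N * μ + (N - 2 * n) * σ ^ 2 / (√π * √(σ ^ 2 + s ^ 2 / n)))) /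
    (N * (μ + σ / √π))

theorem optimalTestSize_eq {N s σ : ℝ} (hN : 0 ≤ N) (hs : s ≠ 0) (hσ : σ ≠ 0) :
    optimalTestSize N s σ = N / 3 / (√(4 * N * σ ^ 2 / (9 * s ^ 2) + 1) + 1) := by
  have hb : 0 < 3 * s ^ 2 / (4 * σ ^ 2) := by positivity
  have hdiv : N * s ^ 2 / (4 * σ ^ 2) / (3 * s ^ 2 / (4 * σ ^ 2)) = N / 3 := by
    field_simp
  have hdiv_sq : N * s ^ 2 / (4 * σ ^ 2) / (3 * s ^ 2 / (4 * σ ^ 2)) ^ 2 =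
      4 * N * σ ^ 2 / (9 * s ^ 2) := by
    field_simp; ring
  rw [optimalTestSize, sqrt_add_sq_sub_eq_div hb (by positivity), hdiv, hdiv_sq]

theorem tendsto_optimalTestSize {N s : ℝ} (hN : 0 ≤ N) (hs : s ≠ 0) :
    Tendsto (optimalTestSize N s) (𝓝[≠] 0) (𝓝 (N / 6)) := by
  have hcont :
      ContinuousAt (fun σ : ℝ => N / 3 / (√(4 * N * σ ^ 2 / (9 * s ^ 2) + 1) + 1)) 0 := by
    fun_prop (disch := positivity)
  refine ((hcont.tendsto.mono_left nhdsWithin_le_nhds).congr' ?_).trans_eq ?_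
  · filter_upwards [self_mem_nhdsWithin] with σ hσ
    exact (optimalTestSize_eq hN hs hσ).symm
  · norm_num; ring

theorem relativeRegret_zero (N μ s n : ℝ) : relativeRegret N μ s 0 n = 0 := by
  simp [relativeRegret]

theorem continuousAt_relativeRegret {N μ s n : ℝ} (hN : N ≠ 0) (hμ : μ ≠ 0) (hs : s ≠ 0)
    (hn : 0 < n) :
    ContinuousAt (fun p : ℝ × ℝ => relativeRegret N μ s p.1 p.2) (0, n) := by
  unfold relativeRegret
  fun_prop (disch := simp [sqrt_eq_zero', pi_pos, *] <;> positivity)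

theorem relative_regret_tendsto_zero_at_zero (N s μ : ℝ)
    (hN : 0 < N) (hs : 0 < s) (hμ : 0 < μ)
    (nstar R : ℝ → ℝ)
    (hnstar : ∀ σ, nstar σ = Real.sqrt (N * s ^ 2 / (4 * σ ^ 2) +
      (3 * s ^ 2 / (4 * σ ^ 2)) ^ 2) - 3 * s ^ 2 / (4 * σ ^ 2))
    (hR : ∀ σ, R σ =
      (N * (μ + σ / Real.sqrt Real.pi) -
        (N * μ + (N - 2 * nstar σ) * σ ^ 2 /
          (Real.sqrt Real.pi * Real.sqrt (σ ^ 2 + s ^ 2 / nstar σ)))) /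
        (N * (μ + σ / Real.sqrt Real.pi))) :
    Filter.Tendsto R (nhdsWithin 0 (Set.Ioi 0)) (nhds 0) := by
  obtain rfl : nstar = optimalTestSize N s := funext hnstar
  obtain rfl : R = fun σ => relativeRegret N μ s σ (optimalTestSize N s σ) := funext hR
  have hσ : Tendsto id (𝓝[>] (0 : ℝ)) (𝓝 0) := nhdsWithin_le_nhds
  have hn : Tendsto (optimalTestSize N s) (𝓝[>] 0) (𝓝 (N / 6)) :=
    (tendsto_optimalTestSize hN.le hs.ne').mono_left (nhdsWithin_mono _ fun _ h => ne_of_gt h)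
  have := (continuousAt_relativeRegret hN.ne' hμ.ne' hs.ne' (by positivity)).tendsto.comp
    (hσ.prodMk_nhds hn)
  rwa [relativeRegret_zero] at this
end

section
/- Let s > 0, σ₁ > 0, c > 1, μ be real, and N > (2c⁴ − c² − 1)·s²/(c²·σ₁²). Define g(n₁, n₂) = N·μ + (N − n₁ − n₂)·v(n₁, n₂)/√(2π) with v(n₁, n₂) = √(σ₁⁴/(σ₁² + s²/n₁) + c⁴·σ₁⁴/(c²·σ₁² + s²/n₂)), and let n₁* = s·(√(2c²(c²+1)·N·σ₁² + (2c⁴+5c²+2)·s²) − c·s·(1+2c²))/(2(c³+c)·σ₁²) and n₂* = s·(c·√(2c²(c²+1)·N·σ₁² + (2c⁴+5c²+2)·s²) − (c²+2)·s)/(2c²(c²+1)·σ₁²). Then both partial derivatives of g vanish at (n₁*, n₂*): ∂g/∂n₁(n₁*, n₂*) = 0 and ∂g/∂n₂(n₁*, n₂*) = 0. -/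
/-!
Write `V = v²` and `K = N - n₁ - n₂`. Each partial derivative of `g` equals
`(-√V + K · ∂ᵢV / (2√V)) / √(2π)`, so the first-order conditions read `K · ∂ᵢV = 2V`, where
`∂ᵢV = σᵢ⁴s² / (σᵢ²nᵢ + s²)²` with `σ₂ = cσ₁`. The candidate point satisfies the balance
`c²σ₁²n₂* + s² = c²(σ₁²n₁* + s²)`, which makes `∂₁V = ∂₂V`; both conditions then collapse to the
single identity `K s² = 2(n₁ + c²n₂)(σ₁²n₁ + s²)`, a polynomial identity in the square root `r`
appearing in `n₁*, n₂*` once `r²` is replaced by its radicand. The lower bound on `N` is exactly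
what makes `n₁*` and `n₂*` positive.
-/

open Real

theorem hasDerivAt_const_div_add_const_div (a b k : ℝ) {n : ℝ} (hn : n ≠ 0)
    (hd : b * n + k ≠ 0) :
    HasDerivAt (fun m => a / (b + k / m)) (a * k / (b * n + k) ^ 2) n := by
  have hsum : b + k / n = (b * n + k) / n := by field_simp
  refine ((hasDerivAt_const n a).div
    (((hasDerivAt_const n k).div (hasDerivAt_id n) hn).const_add b)
    (hsum ▸ div_ne_zero hd hn)).congr_deriv ?_
  simp only [Pi.div_apply, id, hsum]
  field_simp
  ring

theorem hasDerivAt_const_add_mul_sqrt_div_eq_zero {K Q : ℝ → ℝ} {Q' x : ℝ} (a b : ℝ)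
    (hK : HasDerivAt K (-1) x) (hQ : HasDerivAt Q Q' x) (hQx : 0 < Q x)
    (hstat : K x * Q' = 2 * Q x) :
    HasDerivAt (fun y => a + K y * √(Q y) / b) 0 x := by
  have hsqrt := Real.sqrt_pos.2 hQx
  refine (((hK.mul (hQ.sqrt hQx.ne')).div_const b).const_add a).congr_deriv ?_
  rw [mul_div_assoc', hstat]
  field_simp
  rw [Real.sq_sqrt hQx.le]
  ring

/-- The candidate sizes `n₁*`, `n₂*` of the statement, with `r` standing for the square root
`√(2c²(c²+1)Nσ² + (2c⁴+5c²+2)s²)`. -/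
noncomputable def incumbentSize (s σ c r : ℝ) : ℝ :=
  s * (r - c * s * (1 + 2 * c ^ 2)) / (2 * (c ^ 3 + c) * σ ^ 2)

noncomputable def challengerSize (s σ c r : ℝ) : ℝ :=
  s * (c * r - (c ^ 2 + 2) * s) / (2 * c ^ 2 * (c ^ 2 + 1) * σ ^ 2)

section CandidatePoint

variable {N s σ c r : ℝ}

theorem incumbentSize_pos (hs : 0 < s) (hσ : σ ≠ 0) (hc : 0 < c)
    (hr : c * s * (1 + 2 * c ^ 2) < r) : 0 < incumbentSize s σ c r := by
  unfold incumbentSize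
  have := sub_pos.2 hr
  positivity

theorem challengerSize_pos (hs : 0 < s) (hσ : σ ≠ 0) (hc : 1 < c)
    (hr : c * s * (1 + 2 * c ^ 2) < r) : 0 < challengerSize s σ c r := by
  unfold challengerSize
  have : 0 < c * r - (c ^ 2 + 2) * s := by
    have hc4 : 1 < c ^ 4 := one_lt_pow₀ hc (by norm_num)
    nlinarith [mul_lt_mul_of_pos_left hr (zero_lt_one.trans hc)]
  have : 0 < c := zero_lt_one.trans hc
  positivity

theorem challengerSize_balance (hσ : σ ≠ 0) (hc : c ≠ 0) :
    c ^ 2 * σ ^ 2 * challengerSize s σ c r + s ^ 2 =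
      c ^ 2 * (σ ^ 2 * incumbentSize s σ c r + s ^ 2) := by
  unfold incumbentSize challengerSize
  field_simp
  ring

theorem incumbentSize_challengerSize_budget (hσ : σ ≠ 0) (hc : c ≠ 0)
    (hr : r ^ 2 = 2 * c ^ 2 * (c ^ 2 + 1) * N * σ ^ 2 + (2 * c ^ 4 + 5 * c ^ 2 + 2) * s ^ 2) :
    (N - incumbentSize s σ c r - challengerSize s σ c r) * s ^ 2 =
      2 * (incumbentSize s σ c r + c ^ 2 * challengerSize s σ c r) *
        (σ ^ 2 * incumbentSize s σ c r + s ^ 2) := by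
  have hN : N = (r ^ 2 - (2 * c ^ 4 + 5 * c ^ 2 + 2) * s ^ 2) /
      (2 * c ^ 2 * (c ^ 2 + 1) * σ ^ 2) := by
    rw [hr]; field_simp; ring
  rw [hN]
  unfold incumbentSize challengerSize
  field_simp
  ring

theorem lt_sqrt_radicand (hσ : σ ≠ 0) (hc : 0 < c) (hs : 0 ≤ s)
    (hN : (2 * c ^ 4 - c ^ 2 - 1) * s ^ 2 / (c ^ 2 * σ ^ 2) < N) :
    c * s * (1 + 2 * c ^ 2) <
      √(2 * c ^ 2 * (c ^ 2 + 1) * N * σ ^ 2 + (2 * c ^ 4 + 5 * c ^ 2 + 2) * s ^ 2) := by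
  rw [div_lt_iff₀ (by positivity)] at hN
  rw [Real.lt_sqrt (by positivity)]
  nlinarith [mul_lt_mul_of_pos_left hN (by positivity : (0:ℝ) < 2 * (c ^ 2 + 1))]

theorem first_order_of_balance {n₁ n₂ : ℝ} (hn₁ : n₁ ≠ 0) (hn₂ : n₂ ≠ 0) (hc : c ≠ 0)
    (hD : σ ^ 2 * n₁ + s ^ 2 ≠ 0)
    (hbal : c ^ 2 * σ ^ 2 * n₂ + s ^ 2 = c ^ 2 * (σ ^ 2 * n₁ + s ^ 2))
    (hbud : (N - n₁ - n₂) * s ^ 2 = 2 * (n₁ + c ^ 2 * n₂) * (σ ^ 2 * n₁ + s ^ 2)) :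
    (N - n₁ - n₂) * (σ ^ 4 * s ^ 2 / (σ ^ 2 * n₁ + s ^ 2) ^ 2) =
        2 * (σ ^ 4 / (σ ^ 2 + s ^ 2 / n₁) + c ^ 4 * σ ^ 4 / (c ^ 2 * σ ^ 2 + s ^ 2 / n₂)) ∧
      (N - n₁ - n₂) * (c ^ 4 * σ ^ 4 * s ^ 2 / (c ^ 2 * σ ^ 2 * n₂ + s ^ 2) ^ 2) =
        2 * (σ ^ 4 / (σ ^ 2 + s ^ 2 / n₁) + c ^ 4 * σ ^ 4 / (c ^ 2 * σ ^ 2 + s ^ 2 / n₂)) := by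
  have h₁ : σ ^ 2 + s ^ 2 / n₁ = (σ ^ 2 * n₁ + s ^ 2) / n₁ := by field_simp
  have h₂ : c ^ 2 * σ ^ 2 + s ^ 2 / n₂ = c ^ 2 * (σ ^ 2 * n₁ + s ^ 2) / n₂ := by
    rw [← hbal]; field_simp
  have hsame : c ^ 4 * σ ^ 4 * s ^ 2 / (c ^ 2 * σ ^ 2 * n₂ + s ^ 2) ^ 2 =
      σ ^ 4 * s ^ 2 / (σ ^ 2 * n₁ + s ^ 2) ^ 2 := by
    rw [hbal]; field_simp
  rw [hsame, and_self, h₁, h₂]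
  generalize σ ^ 2 * n₁ + s ^ 2 = D at hD hbud ⊢
  field_simp
  linear_combination σ ^ 4 * hbud

end CandidatePoint

theorem incumbent_challenger_first_order_conditions (N s σ₁ c μ : ℝ)
    (hs : 0 < s) (hσ₁ : 0 < σ₁) (hc : 1 < c)
    (hN : (2 * c ^ 4 - c ^ 2 - 1) * s ^ 2 / (c ^ 2 * σ₁ ^ 2) < N)
    (g : ℝ → ℝ → ℝ)
    (hg : ∀ n₁ n₂, g n₁ n₂ = N * μ + (N - n₁ - n₂) *
      Real.sqrt (σ₁ ^ 4 / (σ₁ ^ 2 + s ^ 2 / n₁) +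
        c ^ 4 * σ₁ ^ 4 / (c ^ 2 * σ₁ ^ 2 + s ^ 2 / n₂)) / Real.sqrt (2 * Real.pi))
    (n₁star n₂star : ℝ)
    (hn₁ : n₁star = s * (Real.sqrt (2 * c ^ 2 * (c ^ 2 + 1) * N * σ₁ ^ 2 +
        (2 * c ^ 4 + 5 * c ^ 2 + 2) * s ^ 2) - c * s * (1 + 2 * c ^ 2)) /
      (2 * (c ^ 3 + c) * σ₁ ^ 2))
    (hn₂ : n₂star = s * (c * Real.sqrt (2 * c ^ 2 * (c ^ 2 + 1) * N * σ₁ ^ 2 +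
        (2 * c ^ 4 + 5 * c ^ 2 + 2) * s ^ 2) - (c ^ 2 + 2) * s) /
      (2 * c ^ 2 * (c ^ 2 + 1) * σ₁ ^ 2)) :
    HasDerivAt (fun n₁ => g n₁ n₂star) 0 n₁star ∧
    HasDerivAt (fun n₂ => g n₁star n₂) 0 n₂star := by
  have hc₀ : 0 < c := zero_lt_one.trans hc
  have hr := lt_sqrt_radicand hσ₁.ne' hc₀ hs.le hN
  have hr₂ := Real.sq_sqrt (Real.sqrt_pos.1 ((by positivity : (0:ℝ) ≤ _).trans_lt hr)).le
  set r := √(2 * c ^ 2 * (c ^ 2 + 1) * N * σ₁ ^ 2 + (2 * c ^ 4 + 5 * c ^ 2 + 2) * s ^ 2)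
  replace hn₁ : n₁star = incumbentSize s σ₁ c r := hn₁
  replace hn₂ : n₂star = challengerSize s σ₁ c r := hn₂
  have hpos₁ : 0 < n₁star := hn₁ ▸ incumbentSize_pos hs hσ₁.ne' hc₀ hr
  have hpos₂ : 0 < n₂star := hn₂ ▸ challengerSize_pos hs hσ₁.ne' hc hr
  obtain ⟨hstat₁, hstat₂⟩ := first_order_of_balance hpos₁.ne' hpos₂.ne' hc₀.ne'
    (by positivity) (hn₁ ▸ hn₂ ▸ challengerSize_balance hσ₁.ne' hc₀.ne')
    (hn₁ ▸ hn₂ ▸ incumbentSize_challengerSize_budget hσ₁.ne' hc₀.ne' hr₂)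
  have hV : 0 < σ₁ ^ 4 / (σ₁ ^ 2 + s ^ 2 / n₁star) +
      c ^ 4 * σ₁ ^ 4 / (c ^ 2 * σ₁ ^ 2 + s ^ 2 / n₂star) := by
    positivity
  simp only [hg]
  constructor
  · refine hasDerivAt_const_add_mul_sqrt_div_eq_zero _ _ ?_
      ((hasDerivAt_const_div_add_const_div _ _ _ hpos₁.ne' (by positivity)).add_const _) hV hstat₁
    simpa using ((hasDerivAt_id n₁star).const_sub N).sub_const n₂star
  · refine hasDerivAt_const_add_mul_sqrt_div_eq_zero _ _ ?_
      ((hasDerivAt_const_div_add_const_div _ _ _ hpos₂.ne' (by positivity)).const_add _) hV hstat₂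
    simpa using (hasDerivAt_id n₂star).const_sub (N - n₁star)
end

section
/- Let N > 0, s > 0, σ₁ > 0 and c > 1, and define n₁* = s·(√(2c²(c²+1)·N·σ₁² + (2c⁴+5c²+2)·s²) − c·s·(1+2c²))/(2(c³+c)·σ₁²) and n₂* = s·(c·√(2c²(c²+1)·N·σ₁² + (2c⁴+5c²+2)·s²) − (c²+2)·s)/(2c²(c²+1)·σ₁²). Then n₂* > n₁*; that is, the optimal incumbent/challenger test allocates a strictly larger sample to the challenger treatment. -/
open Real

theorem challenger_sub_incumbent_eq (s σ c R : ℝ) (hc : c ≠ 0) (hσ : σ ≠ 0) :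
    s * (c * R - (c ^ 2 + 2) * s) / (2 * c ^ 2 * (c ^ 2 + 1) * σ ^ 2) -
        s * (R - c * s * (1 + 2 * c ^ 2)) / (2 * (c ^ 3 + c) * σ ^ 2) =
      s ^ 2 * (c ^ 2 - 1) / (c ^ 2 * σ ^ 2) := by
  have hc1 : c ^ 2 + 1 ≠ 0 := by positivity
  have hc3 : c ^ 3 + c ≠ 0 := by
    rw [show c ^ 3 + c = c * (c ^ 2 + 1) by ring]
    exact mul_ne_zero hc hc1
  field_simp
  ring

theorem challenger_sample_larger_general (N s σ₁ c : ℝ)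
    (hs : 0 < s) (hσ₁ : 0 < σ₁) (hc : 1 < c)
    (n₁star n₂star : ℝ)
    (hn₁ : n₁star = s * (Real.sqrt (2 * c ^ 2 * (c ^ 2 + 1) * N * σ₁ ^ 2 +
        (2 * c ^ 4 + 5 * c ^ 2 + 2) * s ^ 2) - c * s * (1 + 2 * c ^ 2)) /
      (2 * (c ^ 3 + c) * σ₁ ^ 2))
    (hn₂ : n₂star = s * (c * Real.sqrt (2 * c ^ 2 * (c ^ 2 + 1) * N * σ₁ ^ 2 +
        (2 * c ^ 4 + 5 * c ^ 2 + 2) * s ^ 2) - (c ^ 2 + 2) * s) /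
      (2 * c ^ 2 * (c ^ 2 + 1) * σ₁ ^ 2)) :
    n₂star > n₁star := by
  have hc_pos : 0 < c := by linarith
  have hc_sq : 0 < c ^ 2 - 1 := by nlinarith
  have hgap := challenger_sub_incumbent_eq s σ₁ c
    (Real.sqrt (2 * c ^ 2 * (c ^ 2 + 1) * N * σ₁ ^ 2 + (2 * c ^ 4 + 5 * c ^ 2 + 2) * s ^ 2))
    hc_pos.ne' hσ₁.ne'
  rw [← hn₁, ← hn₂] at hgap
  have hgap_pos : 0 < n₂star - n₁star := by
    rw [hgap]
    positivity
  linarith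

theorem challenger_sample_larger (N s σ₁ c : ℝ)
    (hN : 0 < N) (hs : 0 < s) (hσ₁ : 0 < σ₁) (hc : 1 < c)
    (n₁star n₂star : ℝ)
    (hn₁ : n₁star = s * (Real.sqrt (2 * c ^ 2 * (c ^ 2 + 1) * N * σ₁ ^ 2 +
        (2 * c ^ 4 + 5 * c ^ 2 + 2) * s ^ 2) - c * s * (1 + 2 * c ^ 2)) /
      (2 * (c ^ 3 + c) * σ₁ ^ 2))
    (hn₂ : n₂star = s * (c * Real.sqrt (2 * c ^ 2 * (c ^ 2 + 1) * N * σ₁ ^ 2 +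
        (2 * c ^ 4 + 5 * c ^ 2 + 2) * s ^ 2) - (c ^ 2 + 2) * s) /
      (2 * c ^ 2 * (c ^ 2 + 1) * σ₁ ^ 2)) :
    n₂star > n₁star :=
  challenger_sample_larger_general N s σ₁ c hs hσ₁ hc n₁star n₂star hn₁ hn₂
end

section
/- Let N > 0, s > 0, σ₁ > 0 and c > 1, and define n₁* = s·(√(2c²(c²+1)·N·σ₁² + (2c⁴+5c²+2)·s²) − c·s·(1+2c²))/(2(c³+c)·σ₁²) and n₂* = s·(c·√(2c²(c²+1)·N·σ₁² + (2c⁴+5c²+2)·s²) − (c²+2)·s)/(2c²(c²+1)·σ₁²). Then n₂* > 0, and n₁* > 0 if and only if N > (2c⁴ − c² − 1)·s²/(c²·σ₁²). -/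
open Real

/-!
Write `R` for the radicand. Both numerators have the shape `a * √R - b` with `a, b ≥ 0`, so each is
positive exactly when `b ^ 2 < a ^ 2 * R`. The two differences `a ^ 2 * R - b ^ 2` factor
explicitly: for `n₂*` it is a sum of terms that are nonnegative once `c ≥ 1`, one of them strictly
positive, and for `n₁*` it is `2 (c² + 1)` times `c² N σ₁² - (2c⁴ - c² - 1) s²`.
-/

namespace IncumbentChallenger

def radicand (N s σ c : ℝ) : ℝ :=
  2 * c ^ 2 * (c ^ 2 + 1) * N * σ ^ 2 + (2 * c ^ 4 + 5 * c ^ 2 + 2) * s ^ 2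

lemma sq_mul_radicand_sub_sq (N s σ c : ℝ) :
    c ^ 2 * radicand N s σ c - ((c ^ 2 + 2) * s) ^ 2 =
      2 * c ^ 4 * (c ^ 2 + 1) * N * σ ^ 2 + 2 * (c ^ 2 + 2) * (c ^ 4 - 1) * s ^ 2 := by
  unfold radicand; ring

lemma radicand_sub_sq (N s σ c : ℝ) :
    radicand N s σ c - (c * s * (1 + 2 * c ^ 2)) ^ 2 =
      2 * (c ^ 2 + 1) * (c ^ 2 * N * σ ^ 2 - (2 * c ^ 4 - c ^ 2 - 1) * s ^ 2) := by
  unfold radicand; ring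

lemma sq_add_two_mul_lt_mul_sqrt_radicand {N σ c : ℝ} (s : ℝ) (hN : 0 < N) (hσ : σ ≠ 0)
    (hc : 1 ≤ c) : (c ^ 2 + 2) * s < c * √(radicand N s σ c) := by
  have hc4 : 0 ≤ c ^ 4 - 1 := sub_nonneg.2 (one_le_pow₀ hc)
  have hlt : ((c ^ 2 + 2) * s) ^ 2 < c ^ 2 * radicand N s σ c := by
    have hN_term : 0 < 2 * c ^ 4 * (c ^ 2 + 1) * N * σ ^ 2 := by positivity
    have hs_term : 0 ≤ 2 * (c ^ 2 + 2) * (c ^ 4 - 1) * s ^ 2 := by positivity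
    linarith [sq_mul_radicand_sub_sq N s σ c]
  calc (c ^ 2 + 2) * s < √(c ^ 2 * radicand N s σ c) := Real.lt_sqrt_of_sq_lt hlt
    _ = c * √(radicand N s σ c) := by
      rw [Real.sqrt_mul (sq_nonneg c), Real.sqrt_sq (by linarith)]

lemma mul_lt_sqrt_radicand_iff {N s σ c : ℝ} (hs : 0 ≤ s) (hc : 0 ≤ c) :
    c * s * (1 + 2 * c ^ 2) < √(radicand N s σ c) ↔
      (2 * c ^ 4 - c ^ 2 - 1) * s ^ 2 < c ^ 2 * N * σ ^ 2 := by
  have hpos : (0 : ℝ) < 2 * (c ^ 2 + 1) := by positivity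
  rw [Real.lt_sqrt (by positivity), ← sub_pos, radicand_sub_sq, mul_pos_iff_of_pos_left hpos,
    sub_pos]

end IncumbentChallenger

open IncumbentChallenger in
theorem incumbent_challenger_positivity (N s σ₁ c : ℝ)
    (hN : 0 < N) (hs : 0 < s) (hσ₁ : 0 < σ₁) (hc : 1 < c)
    (n₁star n₂star : ℝ)
    (hn₁ : n₁star = s * (Real.sqrt (2 * c ^ 2 * (c ^ 2 + 1) * N * σ₁ ^ 2 +
        (2 * c ^ 4 + 5 * c ^ 2 + 2) * s ^ 2) - c * s * (1 + 2 * c ^ 2)) /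
      (2 * (c ^ 3 + c) * σ₁ ^ 2))
    (hn₂ : n₂star = s * (c * Real.sqrt (2 * c ^ 2 * (c ^ 2 + 1) * N * σ₁ ^ 2 +
        (2 * c ^ 4 + 5 * c ^ 2 + 2) * s ^ 2) - (c ^ 2 + 2) * s) /
      (2 * c ^ 2 * (c ^ 2 + 1) * σ₁ ^ 2)) :
    0 < n₂star ∧
    (0 < n₁star ↔ (2 * c ^ 4 - c ^ 2 - 1) * s ^ 2 / (c ^ 2 * σ₁ ^ 2) < N) := by
  have hc0 : 0 < c := zero_lt_one.trans hc
  subst hn₁ hn₂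
  change 0 < s * (c * √(radicand N s σ₁ c) - (c ^ 2 + 2) * s) / _ ∧
    (0 < s * (√(radicand N s σ₁ c) - c * s * (1 + 2 * c ^ 2)) / _ ↔ _)
  refine ⟨?_, ?_⟩
  · have hnum := sq_add_two_mul_lt_mul_sqrt_radicand s hN hσ₁.ne' hc.le
    exact div_pos (mul_pos hs (sub_pos.2 hnum)) (by positivity)
  · rw [div_pos_iff_of_pos_right (by positivity), mul_pos_iff_of_pos_left hs, sub_pos,
      mul_lt_sqrt_radicand_iff hs.le hc0.le, div_lt_iff₀ (by positivity),
      show c ^ 2 * N * σ₁ ^ 2 = N * (c ^ 2 * σ₁ ^ 2) by ring]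
end
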